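/- arXiv:1708.03902 — 2 statements merged into one kernel-verified Lean document; each statement's English description precedes it below -/
import Mathlib

section
/- Let H be a real inner product space and let p ≥ 1 be a real number. Then there exists a constant C > 0 (depending only on p) such that for all x, h ∈ H one has | ‖x+h‖^(2p) − ‖x‖^(2p) − 2p·‖x‖^(2p−2)·⟪x,h⟫ | ≤ C·(‖x‖^(2p−2) + ‖h‖^(2p−2))·‖h‖². -/
open Real NNReal

lemma tangent_le {r u v : ℝ} (hr : 1 ≤ r) (hu : 0 ≤ u) (hv : 0 ≤ v) :
    v ^ r + r * v ^ (r - 1) * (u - v) ≤ u ^ r := by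
  rcases hv.eq_or_lt with rfl | hv
  · rcases hr.eq_or_lt with rfl | hr1
    · simp
    · rw [Real.zero_rpow (by linarith), Real.zero_rpow (by linarith)]
      simpa using Real.rpow_nonneg hu r
  · have hvp : -1 ≤ u / v - 1 := by
      have : 0 ≤ u / v := div_nonneg hu hv.le
      linarith
    have hb := one_add_mul_self_le_rpow_one_add hvp hr
    rw [add_sub_cancel, Real.div_rpow hu hv.le] at hb
    have hvr : (0:ℝ) < v ^ r := Real.rpow_pos_of_pos hv r
    have h2 := mul_le_mul_of_nonneg_left hb hvr.le
    have h3 : v ^ r * (u ^ r / v ^ r) = u ^ r := by field_simp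
    rw [h3] at h2
    refine le_trans (le_of_eq ?_) h2
    rw [Real.rpow_sub hv, Real.rpow_one]
    field_simp

lemma tangent_ge {r u v : ℝ} (hr0 : 0 ≤ r) (hr : r ≤ 1) (hu : 0 ≤ u) (hv : 0 < v) :
    u ^ r ≤ v ^ r + r * v ^ (r - 1) * (u - v) := by
  have hvp : -1 ≤ u / v - 1 := by
    have : 0 ≤ u / v := div_nonneg hu hv.le
    linarith
  have hb := rpow_one_add_le_one_add_mul_self hvp hr0 hr
  rw [add_sub_cancel, Real.div_rpow hu hv.le] at hb
  have hvr : (0:ℝ) < v ^ r := Real.rpow_pos_of_pos hv r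
  have h2 := mul_le_mul_of_nonneg_left hb hvr.le
  have h3 : v ^ r * (u ^ r / v ^ r) = u ^ r := by field_simp
  rw [h3] at h2
  refine le_trans h2 (le_of_eq ?_)
  rw [Real.rpow_sub hv, Real.rpow_one]
  field_simp

lemma rpow_sub_le {r u v : ℝ} (hr0 : 0 ≤ r) (hr : r ≤ 1) (hv : 0 ≤ v)
    (huv : v ≤ u) : u ^ r - v ^ r ≤ (u - v) ^ r := by
  have hw : (0:ℝ) ≤ u - v := by linarith
  have hu : (0:ℝ) ≤ u := by linarith
  have key := NNReal.rpow_add_le_add_rpow v.toNNReal (u-v).toNNReal hr0 hr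
  have h1 : (v.toNNReal + (u-v).toNNReal) = u.toNNReal := by
    ext
    push_cast [Real.coe_toNNReal _ hv, Real.coe_toNNReal _ hw, Real.coe_toNNReal _ hu]
    ring
  rw [h1] at key
  have key2 : ((u.toNNReal ^ r : ℝ≥0) : ℝ) ≤ ((v.toNNReal ^ r + (u-v).toNNReal ^ r : ℝ≥0) : ℝ) :=
    by exact_mod_cast key
  push_cast [NNReal.coe_rpow, Real.coe_toNNReal _ hv, Real.coe_toNNReal _ hw,
    Real.coe_toNNReal _ hu] at key2
  linarith

lemma abs_rpow_sub_le {r u v : ℝ} (hr0 : 0 ≤ r) (hr : r ≤ 1) (hu : 0 ≤ u) (hv : 0 ≤ v) :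
    |u ^ r - v ^ r| ≤ |u - v| ^ r := by
  rcases le_total v u with h | h
  · rw [abs_of_nonneg (by linarith : (0:ℝ) ≤ u - v)]
    have h2 := rpow_sub_le hr0 hr hv h
    have h3 : v ^ r ≤ u ^ r := Real.rpow_le_rpow hv h hr0
    rw [abs_of_nonneg (by linarith)]
    linarith
  · rw [abs_of_nonpos (by linarith : u - v ≤ 0)]
    have h2 := rpow_sub_le hr0 hr hu h
    have h3 : u ^ r ≤ v ^ r := Real.rpow_le_rpow hu h hr0
    rw [abs_of_nonpos (by linarith)]
    have : -(u-v) = v - u := by ring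
    rw [this]
    linarith

lemma lip_low {q u v m : ℝ} (hq0 : 0 ≤ q) (hq1 : q ≤ 1) (hm : 0 < m)
    (hu : m ≤ u) (hv : m ≤ v) : |u ^ q - v ^ q| ≤ q * m ^ (q - 1) * |u - v| := by
  have key : ∀ a b : ℝ, m ≤ a → m ≤ b → b ≤ a → a ^ q - b ^ q ≤ q * m ^ (q - 1) * (a - b) := by
    intro a b ha hb hba
    have ht := tangent_ge hq0 hq1 (by linarith : (0:ℝ) ≤ a) (by linarith : (0:ℝ) < b)
    have hmono : b ^ (q - 1) ≤ m ^ (q - 1) :=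
      Real.rpow_le_rpow_of_nonpos hm hb (by linarith)
    have h2 : q * b ^ (q - 1) * (a - b) ≤ q * m ^ (q - 1) * (a - b) := by
      have := mul_le_mul_of_nonneg_left hmono hq0
      exact mul_le_mul_of_nonneg_right this (by linarith)
    linarith
  rcases le_total v u with h | h
  · have h1 := key u v hu hv h
    have h2 : v ^ q ≤ u ^ q := Real.rpow_le_rpow (by linarith) h hq0
    rw [abs_of_nonneg (by linarith : (0:ℝ) ≤ u ^ q - v ^ q),
      abs_of_nonneg (by linarith : (0:ℝ) ≤ u - v)]
    exact h1
  · have h1 := key v u hv hu h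
    have h2 : u ^ q ≤ v ^ q := Real.rpow_le_rpow (by linarith) h hq0
    rw [abs_of_nonpos (by linarith : u ^ q - v ^ q ≤ 0),
      abs_of_nonpos (by linarith : u - v ≤ 0)]
    have e1 : -(u ^ q - v ^ q) = v ^ q - u ^ q := by ring
    have e2 : -(u - v) = v - u := by ring
    rw [e1, e2]
    exact h1

lemma lip_high {q u v M : ℝ} (hq1 : 1 ≤ q) (hu : 0 ≤ u) (huM : u ≤ M)
    (hv : 0 ≤ v) (hvM : v ≤ M) : |u ^ q - v ^ q| ≤ q * M ^ (q - 1) * |u - v| := by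
  have hM : 0 ≤ M := le_trans hu huM
  have key : ∀ a b : ℝ, 0 ≤ a → 0 ≤ b → b ≤ a → a ≤ M →
      a ^ q - b ^ q ≤ q * M ^ (q - 1) * (a - b) := by
    intro a b ha hb hba haM
    have ht := tangent_le hq1 hb ha
    have hmono : a ^ (q - 1) ≤ M ^ (q - 1) := Real.rpow_le_rpow ha haM (by linarith)
    have h2 : q * a ^ (q - 1) * (a - b) ≤ q * M ^ (q - 1) * (a - b) := by
      have := mul_le_mul_of_nonneg_left hmono (by linarith : (0:ℝ) ≤ q)
      exact mul_le_mul_of_nonneg_right this (by linarith)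
    nlinarith [ht]
  rcases le_total v u with h | h
  · have h1 := key u v hu hv h huM
    have h2 : v ^ q ≤ u ^ q := Real.rpow_le_rpow hv h (by linarith)
    rw [abs_of_nonneg (by linarith : (0:ℝ) ≤ u ^ q - v ^ q),
      abs_of_nonneg (by linarith : (0:ℝ) ≤ u - v)]
    exact h1
  · have h1 := key v u hv hu h hvM
    have h2 : u ^ q ≤ v ^ q := Real.rpow_le_rpow hu h (by linarith)
    rw [abs_of_nonpos (by linarith : u ^ q - v ^ q ≤ 0),
      abs_of_nonpos (by linarith : u - v ≤ 0)]
    have e1 : -(u ^ q - v ^ q) = v ^ q - u ^ q := by ring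
    have e2 : -(u - v) = v - u := by ring
    rw [e1, e2]
    exact h1

set_option maxHeartbeats 1000000 in
lemma key_bound (p : ℝ) (hp : 1 ≤ p) (A B s : ℝ) (hA : 0 ≤ A) (hB : 0 ≤ B)
    (hs : s ^ 2 ≤ A * B) (hu : 0 ≤ A + (2 * s + B)) :
    |(A + (2 * s + B)) ^ p - A ^ p - p * A ^ (p - 1) * (2 * s)|
      ≤ (p + 18 * p * (p - 1) + p * 18 ^ p + 3 * p * (p - 1) * 4 ^ (p - 1))
        * (A ^ (p - 1) + B ^ (p - 1)) * B := by
  have hq0 : 0 ≤ p - 1 := by linarith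
  have hp0 : 0 < p := by linarith
  have hCst : (1:ℝ) ≤ p + 18 * p * (p - 1) + p * 18 ^ p + 3 * p * (p - 1) * 4 ^ (p - 1) := by
    have h1 : (0:ℝ) ≤ 18 * p * (p - 1) := by positivity
    have h2 : (0:ℝ) ≤ p * 18 ^ p := by positivity
    have h3 : (0:ℝ) ≤ 3 * p * (p - 1) * 4 ^ (p - 1) := by positivity
    linarith
  have hCst0 : (0:ℝ) < p + 18 * p * (p - 1) + p * 18 ^ p + 3 * p * (p - 1) * 4 ^ (p - 1) := by
    linarith
  -- trivial case B = 0
  rcases hB.eq_or_lt with rfl | hB0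
  · have hs0 : s = 0 := by nlinarith
    simp [hs0]
  -- trivial case A = 0
  rcases hA.eq_or_lt with rfl | hA0
  · have hs0 : s = 0 := by nlinarith
    have hBq : 0 ≤ B ^ (p-1) := Real.rpow_nonneg hB _
    have hzq : 0 ≤ (0:ℝ) ^ (p-1) := Real.rpow_nonneg le_rfl _
    have hBp : B ^ p = B ^ (p - 1) * B := by
      nth_rewrite 1 [show p = (p - 1) + 1 by ring]
      rw [Real.rpow_add_one hB0.ne']
    have hE : (0 + (2 * s + B)) ^ p - 0 ^ p - p * 0 ^ (p - 1) * (2 * s) = B ^ (p-1) * B := by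
      rw [hs0, Real.zero_rpow hp0.ne']
      rw [show (0:ℝ) + (2 * 0 + B) = B by ring, hBp]; ring
    rw [hE, abs_of_nonneg (by positivity)]
    nlinarith [mul_le_mul_of_nonneg_right (mul_le_mul hCst
      (by linarith : B ^ (p-1) ≤ (0:ℝ) ^ (p-1) + B ^ (p-1)) (by linarith) (by linarith)) hB0.le]
  -- main case: A > 0, B > 0
  set q := p - 1 with hqdef
  set d := 2 * s + B with hddef
  set u := A + d with hudef
  have hud : u - A = d := by rw [hudef]; ring
  have hAq : 0 ≤ A ^ q := Real.rpow_nonneg hA0.le q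
  have hBq : 0 ≤ B ^ q := Real.rpow_nonneg hB0.le q
  have h2s : 2 * |s| ≤ A + B := by
    nlinarith [sq_abs s, sq_nonneg (A - B), abs_nonneg s]
  have hsabs : |s| ≤ |s| := le_refl _
  have hdabs : |d| ≤ A + 2 * B := by
    rw [hddef]
    calc |2 * s + B| ≤ 2 * |s| + B := by
          have h := abs_add_le (2 * s) B
          rw [abs_of_nonneg hB0.le, abs_mul, abs_two] at h
          exact h
      _ ≤ A + 2 * B := by linarith
  have hd2 : d ^ 2 ≤ 6 * (A + B) * B := by
    have h1 := le_abs_self s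
    have h2 := neg_abs_le s
    nlinarith [abs_nonneg s, sq_abs s]
  -- R0 ≥ 0
  have hR0 : 0 ≤ u ^ p - A ^ p - p * A ^ q * d := by
    have ht := tangent_le hp hu hA
    rw [hud] at ht
    linarith
  have hok : u ^ p - A ^ p - p * A ^ q * (2 * s)
      = (u ^ p - A ^ p - p * A ^ q * d) + p * A ^ q * B := by
    rw [hddef]; ring
  -- R0 ≤ p * |u^q - A^q| * |d|
  have hDbound : u ^ p - A ^ p - p * A ^ q * d ≤ p * |u ^ q - A ^ q| * |d| := by
    have ht := tangent_le hp hA hu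
    rw [show A - u = -d by rw [hudef]; ring, mul_neg] at ht
    have h1 : u ^ p - A ^ p ≤ p * u ^ q * d := by linarith
    have h2 : u ^ p - A ^ p - p * A ^ q * d ≤ p * (u ^ q - A ^ q) * d := by
      have hexp : p * (u ^ q - A ^ q) * d = p * u ^ q * d - p * A ^ q * d := by ring
      rw [hexp]; linarith
    refine h2.trans ?_
    rw [mul_assoc, mul_assoc]
    refine mul_le_mul_of_nonneg_left ?_ hp0.le
    calc (u ^ q - A ^ q) * d ≤ |(u ^ q - A ^ q) * d| := le_abs_self _
      _ = |u ^ q - A ^ q| * |d| := abs_mul _ _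
  -- main estimate on p * |u^q - A^q| * |d|
  have hmain : p * |u ^ q - A ^ q| * |d|
      ≤ (18 * p * q + p * 18 ^ p + 3 * p * q * 4 ^ q) * (A ^ q + B ^ q) * B := by
    have habs2 : |d| * |d| = d ^ 2 := by rw [← abs_mul, abs_mul_self]; ring
    rcases le_or_gt q 1 with hq1 | hq1
    · -- p - 1 ≤ 1
      by_cases hc : B ≤ A ∧ |d| ≤ A / 2
      · obtain ⟨hBA, hdA2⟩ := hc
        have hd9 : d ^ 2 ≤ 9 * A * B := by
          nlinarith [le_abs_self s, neg_abs_le s, sq_abs s, abs_nonneg s]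
        have hu2 : A / 2 ≤ u := by
          have := (abs_le.mp hdA2).1
          rw [hudef]; linarith
        have hm2 : (0:ℝ) < A / 2 := by linarith
        have hlip := lip_low hq0 hq1 hm2 hu2 (by linarith : A / 2 ≤ A)
        rw [hud] at hlip
        have hpow : (0:ℝ) ≤ (A/2) ^ (q-1) := Real.rpow_nonneg (by linarith) _
        have e1 : (A/2) ^ (q-1) * (A/2) = (A/2) ^ q := by
          rw [← Real.rpow_add_one hm2.ne' (q-1)]; ring_nf
        have e2 : (A/2) ^ q ≤ A ^ q := Real.rpow_le_rpow (by linarith) (by linarith) hq0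
        calc p * |u ^ q - A ^ q| * |d|
            ≤ p * (q * (A/2) ^ (q-1) * |d|) * |d| := by
              refine mul_le_mul_of_nonneg_right
                (mul_le_mul_of_nonneg_left hlip hp0.le) (abs_nonneg d)
          _ = p * q * (A/2) ^ (q-1) * (|d| * |d|) := by ring
          _ = p * q * (A/2) ^ (q-1) * d ^ 2 := by rw [habs2]
          _ ≤ p * q * (A/2) ^ (q-1) * (9 * A * B) := by
              refine mul_le_mul_of_nonneg_left hd9 (by positivity)
          _ = 18 * p * q * ((A/2) ^ (q-1) * (A/2)) * B := by ring
          _ = 18 * p * q * (A/2) ^ q * B := by rw [e1]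
          _ ≤ 18 * p * q * A ^ q * B := by
              have : 18 * p * q * (A/2) ^ q ≤ 18 * p * q * A ^ q :=
                mul_le_mul_of_nonneg_left e2 (by positivity)
              exact mul_le_mul_of_nonneg_right this hB0.le
          _ ≤ (18 * p * q + p * 18 ^ p + 3 * p * q * 4 ^ q) * (A ^ q + B ^ q) * B := by
              nlinarith [mul_nonneg (mul_nonneg (by positivity : (0:ℝ) ≤ 18 * p * q) hBq) hB0.le,
                mul_nonneg (mul_nonneg (by positivity : (0:ℝ) ≤ p * 18 ^ p + 3 * p * q * 4 ^ q)
                  (by positivity : (0:ℝ) ≤ A ^ q + B ^ q)) hB0.le]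
      · -- |d| ≤ 18 B
        have hd18 : |d| ≤ 18 * B := by
          rcases not_and_or.mp hc with hAB | hdbig
          · have : A < B := lt_of_not_ge hAB
            linarith [hdabs]
          · push_neg at hdbig
            nlinarith [sq_abs d, abs_nonneg d, mul_nonneg (abs_nonneg d) hB0.le]
        have hdel : |u ^ q - A ^ q| ≤ |d| ^ q := by
          have := abs_rpow_sub_le hq0 hq1 hu hA0.le
          rwa [hud] at this
        have hdp : |d| ^ q * |d| = |d| ^ p := by
          by_cases hdz : d = 0
          · rw [hdz]
            simp [Real.zero_rpow hp0.ne']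
          · rw [show p = q + 1 by rw [hqdef]; ring,
              Real.rpow_add_one (abs_ne_zero.mpr hdz)]
        have h18p : |d| ^ p ≤ 18 ^ p * B ^ p := by
          rw [← Real.mul_rpow (by norm_num) hB0.le]
          exact Real.rpow_le_rpow (abs_nonneg d) hd18 hp0.le
        have hBp : B ^ p = B ^ q * B := by
          rw [show p = q + 1 by rw [hqdef]; ring, Real.rpow_add_one hB0.ne']
        calc p * |u ^ q - A ^ q| * |d|
            ≤ p * (|d| ^ q * |d|) := by
              have h1 : |u ^ q - A ^ q| * |d| ≤ |d| ^ q * |d| :=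
                mul_le_mul_of_nonneg_right hdel (abs_nonneg d)
              rw [mul_assoc]
              exact mul_le_mul_of_nonneg_left h1 hp0.le
          _ = p * |d| ^ p := by rw [hdp]
          _ ≤ p * (18 ^ p * B ^ p) := mul_le_mul_of_nonneg_left h18p hp0.le
          _ = p * 18 ^ p * B ^ q * B := by rw [hBp]; ring
          _ ≤ (18 * p * q + p * 18 ^ p + 3 * p * q * 4 ^ q) * (A ^ q + B ^ q) * B := by
              nlinarith [mul_nonneg (mul_nonneg (by positivity : (0:ℝ) ≤ p * 18 ^ p) hAq) hB0.le,
                mul_nonneg (mul_nonneg (by positivity : (0:ℝ) ≤ 18 * p * q + 3 * p * q * 4 ^ q)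
                  (by positivity : (0:ℝ) ≤ A ^ q + B ^ q)) hB0.le]
    · -- q > 1
      have hM0 : (0:ℝ) < 2 * (A + B) := by linarith
      have hMu : u ≤ 2 * (A + B) := by
        have := le_abs_self d
        rw [hudef]; linarith [hdabs]
      have hMA : A ≤ 2 * (A + B) := by linarith
      have hlip := lip_high hq1.le hu hMu hA0.le hMA
      rw [hud] at hlip
      have hpowM : (0:ℝ) ≤ (2*(A+B)) ^ (q-1) := Real.rpow_nonneg hM0.le _
      have eM : (2*(A+B)) ^ (q-1) * (2*(A+B)) = (2*(A+B)) ^ q := by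
        rw [← Real.rpow_add_one hM0.ne' (q-1)]; ring_nf
      have hMq : (2*(A+B)) ^ q ≤ 4 ^ q * (A ^ q + B ^ q) := by
        have h2q : (2:ℝ)^q * (2:ℝ)^q = 4 ^ q := by
          rw [← Real.mul_rpow (by norm_num) (by norm_num)]; norm_num
        have hsplit : (A + B) ^ q ≤ 2 ^ q * (A ^ q + B ^ q) := by
          rcases le_total A B with h | h
          · calc (A + B) ^ q ≤ (2 * B) ^ q :=
                  Real.rpow_le_rpow (by linarith) (by linarith) (by linarith)
              _ = 2 ^ q * B ^ q := Real.mul_rpow (by norm_num) hB0.le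
              _ ≤ 2 ^ q * (A ^ q + B ^ q) := by
                  refine mul_le_mul_of_nonneg_left (by linarith) (by positivity)
          · calc (A + B) ^ q ≤ (2 * A) ^ q :=
                  Real.rpow_le_rpow (by linarith) (by linarith) (by linarith)
              _ = 2 ^ q * A ^ q := Real.mul_rpow (by norm_num) hA0.le
              _ ≤ 2 ^ q * (A ^ q + B ^ q) := by
                  refine mul_le_mul_of_nonneg_left (by linarith) (by positivity)
        calc (2*(A+B)) ^ q = 2 ^ q * (A+B) ^ q := Real.mul_rpow (by norm_num) (by linarith)
          _ ≤ 2 ^ q * (2 ^ q * (A ^ q + B ^ q)) := by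
              refine mul_le_mul_of_nonneg_left hsplit (by positivity)
          _ = 4 ^ q * (A ^ q + B ^ q) := by rw [← h2q]; ring
      calc p * |u ^ q - A ^ q| * |d|
          ≤ p * (q * (2*(A+B)) ^ (q-1) * |d|) * |d| := by
            refine mul_le_mul_of_nonneg_right
              (mul_le_mul_of_nonneg_left hlip hp0.le) (abs_nonneg d)
        _ = p * q * (2*(A+B)) ^ (q-1) * (|d| * |d|) := by ring
        _ = p * q * (2*(A+B)) ^ (q-1) * d ^ 2 := by rw [habs2]
        _ ≤ p * q * (2*(A+B)) ^ (q-1) * (6 * (A + B) * B) := by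
            refine mul_le_mul_of_nonneg_left hd2 (by positivity)
        _ = 3 * p * q * ((2*(A+B)) ^ (q-1) * (2*(A+B))) * B := by ring
        _ = 3 * p * q * (2*(A+B)) ^ q * B := by rw [eM]
        _ ≤ 3 * p * q * (4 ^ q * (A ^ q + B ^ q)) * B := by
            have h1 : 3 * p * q * (2*(A+B)) ^ q ≤ 3 * p * q * (4 ^ q * (A ^ q + B ^ q)) :=
              mul_le_mul_of_nonneg_left hMq (by positivity)
            exact mul_le_mul_of_nonneg_right h1 hB0.le
        _ ≤ (18 * p * q + p * 18 ^ p + 3 * p * q * 4 ^ q) * (A ^ q + B ^ q) * B := by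
            nlinarith [mul_nonneg (mul_nonneg (by positivity : (0:ℝ) ≤ 18 * p * q + p * 18 ^ p)
              (by positivity : (0:ℝ) ≤ A ^ q + B ^ q)) hB0.le]
  have hfin : p * A ^ q * B ≤ p * (A ^ q + B ^ q) * B := by nlinarith [mul_nonneg (mul_nonneg hp0.le hBq) hB0.le]
  rw [hok, abs_of_nonneg (by positivity)]
  have := add_le_add (hDbound.trans hmain) hfin
  calc u ^ p - A ^ p - p * A ^ q * d + p * A ^ q * B
      ≤ (18 * p * q + p * 18 ^ p + 3 * p * q * 4 ^ q) * (A ^ q + B ^ q) * B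
        + p * (A ^ q + B ^ q) * B := this
    _ = (p + 18 * p * q + p * 18 ^ p + 3 * p * q * 4 ^ q) * (A ^ q + B ^ q) * B := by ring

open RealInnerProductSpace

theorem taylor_ineq_one
    {H : Type*} [NormedAddCommGroup H] [InnerProductSpace ℝ H]
    (p : ℝ) (hp : 1 ≤ p) :
    ∃ C : ℝ, 0 < C ∧ ∀ x h : H,
      |‖x + h‖ ^ (2 * p) - ‖x‖ ^ (2 * p)
        - 2 * p * ‖x‖ ^ (2 * p - 2) * ⟪x, h⟫|
      ≤ C * (‖x‖ ^ (2 * p - 2) + ‖h‖ ^ (2 * p - 2)) * ‖h‖ ^ (2 : ℝ) := by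
  refine ⟨p + 18 * p * (p - 1) + p * 18 ^ p + 3 * p * (p - 1) * 4 ^ (p - 1), ?_, ?_⟩
  · have h1 : (0:ℝ) ≤ 18 * p * (p - 1) :=
      mul_nonneg (by positivity) (by linarith)
    have h2 : (0:ℝ) ≤ p * 18 ^ p := by positivity
    have h3 : (0:ℝ) ≤ 3 * p * (p - 1) * 4 ^ (p - 1) :=
      mul_nonneg (mul_nonneg (by positivity) (by linarith)) (by positivity)
    linarith
  intro x h
  set s : ℝ := ⟪x, h⟫ with hsdef
  have hA : (0:ℝ) ≤ ‖x‖ ^ 2 := by positivity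
  have hB : (0:ℝ) ≤ ‖h‖ ^ 2 := by positivity
  have hs : s ^ 2 ≤ ‖x‖ ^ 2 * ‖h‖ ^ 2 := by
    have h1 : |s| ≤ ‖x‖ * ‖h‖ := abs_real_inner_le_norm x h
    nlinarith [sq_abs s, abs_nonneg s, norm_nonneg x, norm_nonneg h]
  have hsq : ‖x + h‖ ^ 2 = ‖x‖ ^ 2 + (2 * s + ‖h‖ ^ 2) := by
    rw [norm_add_sq_real]; ring
  have hu : (0:ℝ) ≤ ‖x‖ ^ 2 + (2 * s + ‖h‖ ^ 2) := by
    rw [← hsq]; positivity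
  have key := key_bound p hp (‖x‖ ^ 2) (‖h‖ ^ 2) s hA hB hs hu
  have e1 : ‖x + h‖ ^ (2 * p) = (‖x + h‖ ^ 2) ^ p := by
    have h2 := Real.rpow_natCast_mul (norm_nonneg (x + h)) 2 p
    norm_num at h2
    exact h2
  have e2 : ‖x‖ ^ (2 * p) = (‖x‖ ^ 2) ^ p := by
    have h2 := Real.rpow_natCast_mul (norm_nonneg x) 2 p
    norm_num at h2
    exact h2
  have e3 : ‖x‖ ^ (2 * p - 2) = (‖x‖ ^ 2) ^ (p - 1) := by
    have h2 := Real.rpow_natCast_mul (norm_nonneg x) 2 (p - 1)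
    norm_num at h2
    rw [show 2 * p - 2 = 2 * (p - 1) by ring, h2]
  have e4 : ‖h‖ ^ (2 * p - 2) = (‖h‖ ^ 2) ^ (p - 1) := by
    have h2 := Real.rpow_natCast_mul (norm_nonneg h) 2 (p - 1)
    norm_num at h2
    rw [show 2 * p - 2 = 2 * (p - 1) by ring, h2]
  have e5 : ‖h‖ ^ (2:ℝ) = ‖h‖ ^ 2 := by
    rw [show (2:ℝ) = ((2:ℕ):ℝ) by norm_num, Real.rpow_natCast]
  rw [e1, e2, e3, e4, e5, hsq]
  rw [show (‖x‖ ^ 2 + (2 * s + ‖h‖ ^ 2)) ^ p - (‖x‖ ^ 2) ^ p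
      - 2 * p * (‖x‖ ^ 2) ^ (p - 1) * s
    = (‖x‖ ^ 2 + (2 * s + ‖h‖ ^ 2)) ^ p - (‖x‖ ^ 2) ^ p
      - p * (‖x‖ ^ 2) ^ (p - 1) * (2 * s) by ring]
  exact key
end

section
/- Let H be a real inner product space and let p ≥ 1 be a real number. Then there exists a constant C > 0 (depending only on p) such that for all x, h ∈ H one has ( ‖x+h‖^(2p) − ‖x‖^(2p) )² ≤ 2·( 4p²·‖x‖^(4p−2)·‖h‖² + C·(‖x‖^(2p−2) + ‖h‖^(2p−2))²·‖h‖⁴ ). -/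
lemma abs_rpow_sub_rpow_le_aux {q : ℝ} (hq : 1 ≤ q) {a b : ℝ} (ha : 0 ≤ a) (hb : 0 ≤ b) :
    |a ^ q - b ^ q| ≤ q * max a b ^ (q - 1) * |a - b| := by
  wlog hab : b ≤ a with HH
  · have := HH hq hb ha (le_of_not_ge hab)
    rwa [abs_sub_comm, max_comm, abs_sub_comm b a] at this
  rw [max_eq_left hab]
  have key := Convex.norm_image_sub_le_of_norm_hasDerivWithin_le
    (f := fun t : ℝ => t ^ q) (f' := fun t : ℝ => q * t ^ (q - 1))
    (s := Set.Icc b a) (C := q * a ^ (q - 1))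
    (fun t _ => (Real.hasDerivAt_rpow_const (Or.inr hq)).hasDerivWithinAt)
    (fun t ht => by
      rw [Real.norm_eq_abs, abs_of_nonneg (mul_nonneg (by linarith)
        (Real.rpow_nonneg (hb.trans ht.1) _))]
      have : t ^ (q - 1) ≤ a ^ (q - 1) :=
        Real.rpow_le_rpow (hb.trans ht.1) ht.2 (by linarith)
      nlinarith)
    (convex_Icc b a) (Set.left_mem_Icc.2 hab) (Set.right_mem_Icc.2 hab)
  simpa [Real.norm_eq_abs] using key

theorem taylor_ineq_two_first
    {H : Type*} [NormedAddCommGroup H] [InnerProductSpace ℝ H]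
    (p : ℝ) (hp : 1 ≤ p) :
    ∃ C : ℝ, 0 < C ∧ ∀ x h : H,
      (‖x + h‖ ^ (2 * p) - ‖x‖ ^ (2 * p)) ^ (2 : ℕ)
      ≤ 2 * (4 * p ^ (2 : ℕ) * ‖x‖ ^ (4 * p - 2) * ‖h‖ ^ (2 : ℝ)
        + C * (‖x‖ ^ (2 * p - 2) + ‖h‖ ^ (2 * p - 2)) ^ (2 : ℕ) * ‖h‖ ^ (4 : ℝ)) := by
  set K : ℝ := 2 * p * (2 * p - 1) * (2 : ℝ) ^ (2 * p - 2) with hKdef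
  have hK : 0 < K := by
    have h2 : (0:ℝ) < (2 : ℝ) ^ (2 * p - 2) := Real.rpow_pos_of_pos two_pos _
    have : (0:ℝ) < 2 * p - 1 := by linarith
    positivity
  refine ⟨K ^ 2, by positivity, fun x h => ?_⟩
  set a := ‖x‖ with hadef
  set b := ‖h‖ with hbdef
  set s := ‖x + h‖ with hsdef
  have ha : 0 ≤ a := norm_nonneg x
  have hb : 0 ≤ b := norm_nonneg h
  have hs : 0 ≤ s := norm_nonneg _
  have hsa : |s - a| ≤ b := by
    have := abs_norm_sub_norm_le (x + h) x
    simpa using this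
  set M : ℝ := max s a with hMdef
  have hM : 0 ≤ M := le_max_of_le_right ha
  have hMa : a ≤ M := le_max_right _ _
  have hMab : M ≤ a + b := by
    refine max_le ?_ (by linarith)
    have := (abs_le.1 hsa).2; linarith
  -- Step 1
  have h1 : |s ^ (2*p) - a ^ (2*p)| ≤ 2*p * M ^ (2*p - 1) * |s - a| :=
    abs_rpow_sub_rpow_le_aux (by linarith) hs ha
  -- Step 2
  have h2 : M ^ (2*p - 1) ≤ a ^ (2*p - 1) + (2*p - 1) * (a + b) ^ (2*p - 2) * b := by
    have key := abs_rpow_sub_rpow_le_aux (q := 2*p - 1) (by linarith) hM ha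
    rw [max_eq_left hMa, show (2*p - 1) - 1 = 2*p - 2 by ring,
      abs_of_nonneg (sub_nonneg.2 hMa)] at key
    have hle : M ^ (2*p - 1) - a ^ (2*p - 1) ≤ (2*p - 1) * M ^ (2*p - 2) * (M - a) :=
      (le_abs_self _).trans key
    have hMpow : M ^ (2*p - 2) ≤ (a + b) ^ (2*p - 2) :=
      Real.rpow_le_rpow hM hMab (by linarith)
    have h4 := mul_le_mul_of_nonneg_left
      (mul_le_mul hMpow (show M - a ≤ b by linarith) (by linarith)
        (Real.rpow_nonneg (by linarith) _))
      (show (0:ℝ) ≤ 2*p - 1 by linarith)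
    nlinarith [hle, h4]
  -- Step 3
  have h3 : (a + b) ^ (2*p - 2) ≤ (2:ℝ) ^ (2*p - 2) * (a ^ (2*p - 2) + b ^ (2*p - 2)) := by
    have hq : (0:ℝ) ≤ 2*p - 2 := by linarith
    have h1' : a + b ≤ 2 * max a b := by
      rcases le_total a b with hab | hab
      · rw [max_eq_right hab]; linarith
      · rw [max_eq_left hab]; linarith
    calc (a + b) ^ (2*p - 2) ≤ (2 * max a b) ^ (2*p - 2) :=
          Real.rpow_le_rpow (by linarith) h1' hq
      _ = (2:ℝ) ^ (2*p - 2) * max a b ^ (2*p - 2) :=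
          Real.mul_rpow (by norm_num) (le_max_of_le_left ha)
      _ ≤ (2:ℝ) ^ (2*p - 2) * (a ^ (2*p - 2) + b ^ (2*p - 2)) := by
          gcongr
          rcases le_total a b with hab | hab
          · rw [max_eq_right hab]
            nlinarith [Real.rpow_nonneg ha (2*p - 2)]
          · rw [max_eq_left hab]
            nlinarith [Real.rpow_nonneg hb (2*p - 2)]
  -- Combine: |X| ≤ A + B
  set A : ℝ := 2*p * a ^ (2*p - 1) * b with hAdef
  set B : ℝ := K * (a ^ (2*p - 2) + b ^ (2*p - 2)) * b ^ 2 with hBdef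
  have hX : |s ^ (2*p) - a ^ (2*p)| ≤ A + B := by
    calc |s ^ (2*p) - a ^ (2*p)| ≤ 2*p * M ^ (2*p - 1) * |s - a| := h1
      _ ≤ 2*p * (a ^ (2*p - 1) + (2*p - 1) * ((2:ℝ) ^ (2*p - 2) * (a ^ (2*p - 2) + b ^ (2*p - 2))) * b) * b := by
          have hM1 : M ^ (2*p - 1) ≤ a ^ (2*p - 1) + (2*p - 1) * ((2:ℝ) ^ (2*p - 2) * (a ^ (2*p - 2) + b ^ (2*p - 2))) * b := by
            have := mul_le_mul_of_nonneg_right (mul_le_mul_of_nonneg_left h3 (show (0:ℝ) ≤ 2*p-1 by linarith)) hb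
            nlinarith [h2]
          have h2p : (0:ℝ) ≤ 2*p := by linarith
          have hnn : (0:ℝ) ≤ 2*p * (a ^ (2*p - 1) + (2*p - 1) * ((2:ℝ) ^ (2*p - 2) * (a ^ (2*p - 2) + b ^ (2*p - 2))) * b) := by
            have n1 : (0:ℝ) ≤ a ^ (2*p-1) := Real.rpow_nonneg ha _
            have n2 : (0:ℝ) ≤ a ^ (2*p-2) := Real.rpow_nonneg ha _
            have n3 : (0:ℝ) ≤ b ^ (2*p-2) := Real.rpow_nonneg hb _
            have n4 : (0:ℝ) ≤ (2:ℝ) ^ (2*p-2) := Real.rpow_nonneg (by norm_num) _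
            have n5 : (0:ℝ) ≤ 2*p - 1 := by linarith
            positivity
          exact mul_le_mul (mul_le_mul_of_nonneg_left hM1 h2p) hsa (abs_nonneg _) hnn
      _ = A + B := by rw [hAdef, hBdef, hKdef]; ring
  -- rewrite RHS
  have hb2 : b ^ (2:ℝ) = b ^ (2:ℕ) := by
    rw [show (2:ℝ) = ((2:ℕ):ℝ) by norm_num, Real.rpow_natCast]
  have hb4 : b ^ (4:ℝ) = b ^ (4:ℕ) := by
    rw [show (4:ℝ) = ((4:ℕ):ℝ) by norm_num, Real.rpow_natCast]
  have ha42 : a ^ (4*p - 2) = (a ^ (2*p - 1)) ^ (2:ℕ) := by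
    rw [← Real.rpow_natCast (a ^ (2*p-1)) 2, ← Real.rpow_mul ha]
    congr 1
    push_cast
    ring
  have habs : (s ^ (2*p) - a ^ (2*p)) ^ (2:ℕ) ≤ (A + B) ^ (2:ℕ) := by
    rw [← sq_abs]
    exact pow_le_pow_left₀ (abs_nonneg _) hX 2
  calc (s ^ (2*p) - a ^ (2*p)) ^ (2:ℕ) ≤ (A + B) ^ (2:ℕ) := habs
    _ ≤ 2 * (A ^ 2 + B ^ 2) := by nlinarith [sq_nonneg (A - B)]
    _ = 2 * (4 * p ^ (2:ℕ) * a ^ (4*p - 2) * b ^ (2:ℝ)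
        + K ^ 2 * (a ^ (2*p - 2) + b ^ (2*p - 2)) ^ (2:ℕ) * b ^ (4:ℝ)) := by
        rw [hb2, hb4, ha42, hAdef, hBdef]; ring
end
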